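/- arXiv:1709.08435 — 3 statements merged into one kernel-verified Lean document; each statement's English description precedes it below -/
import Mathlib

section
/- For every real φ with sin φ ≠ 0 and every real x with |x| < 1, one has 1 / (1 + 2x·cos φ + x²) = ∑_{n=0}^{∞} (−1)^n · (sin((n+1)φ) / sin φ) · x^n, the series on the right being convergent. -/
/-! The coefficients `a n = (-1)^n sin((n+1)φ) / sin φ` satisfy
`a (n+2) + 2 cos φ · a (n+1) + a n = 0` by the addition formula for sine, so multiplying the
series by `1 + 2x cos φ + x²` leaves only `a 0 + (a 1 + 2 cos φ · a 0) x = 1`. Convergence for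
`|x| < 1` follows from `|sin((n+1)φ)| ≤ (n+1)|sin φ|`. -/

open Real

theorem abs_sin_nat_mul_le (n : ℕ) (x : ℝ) : |sin (n * x)| ≤ n * |sin x| := by
  induction n with
  | zero => simp
  | succ n ih =>
    calc |sin ((n + 1 : ℕ) * x)| = |sin (n * x) * cos x + cos (n * x) * sin x| := by
          rw [Nat.cast_succ, add_one_mul, sin_add]
      _ ≤ |sin (n * x)| * |cos x| + |cos (n * x)| * |sin x| := by
          simpa only [abs_mul] using abs_add_le (sin (n * x) * cos x) (cos (n * x) * sin x)
      _ ≤ n * |sin x| * 1 + 1 * |sin x| := by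
          gcongr
          exacts [abs_cos_le_one x, abs_cos_le_one _]
      _ = (n + 1 : ℕ) * |sin x| := by push_cast; ring

theorem summable_mul_pow_of_abs_le_succ {a : ℕ → ℝ} (ha : ∀ n, |a n| ≤ n + 1) {x : ℝ}
    (hx : |x| < 1) : Summable fun n => a n * x ^ n := by
  have hmajorant : Summable fun n : ℕ => ((n : ℝ) + 1) * |x| ^ n := by
    simpa only [pow_one, add_mul, one_mul] using
      (summable_pow_mul_geometric_of_norm_lt_one 1 (by simpa using hx)).add
        (summable_geometric_of_lt_one (abs_nonneg x) hx)
  refine hmajorant.of_norm_bounded fun n => ?_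
  rw [Real.norm_eq_abs, abs_mul, abs_pow]
  exact mul_le_mul_of_nonneg_right (ha n) (by positivity)

theorem mul_tsum_eq_of_linear_recurrence {R : Type*} [CommRing R] [TopologicalSpace R]
    [IsTopologicalRing R] [T2Space R] {a : ℕ → R} {p q : R}
    (hrec : ∀ n, a (n + 2) + p * a (n + 1) + q * a n = 0) {x : R}
    (hs : Summable fun n => a n * x ^ n) :
    (1 + p * x + q * x ^ 2) * ∑' n, a n * x ^ n = a 0 + (a 1 + p * a 0) * x := by
  set f : ℕ → R := fun n => a n * x ^ n
  set S := ∑' n, f n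
  have hS : HasSum f S := hs.hasSum
  have hS1 := (hasSum_nat_add_iff' 1).mpr hS
  have hS2 := (hasSum_nat_add_iff' 2).mpr hS
  have hzero : HasSum (fun n => f (n + 2) + p * x * f (n + 1) + q * x ^ 2 * f n)
      ((S - ∑ i ∈ Finset.range 2, f i) + p * x * (S - ∑ i ∈ Finset.range 1, f i) + q * x ^ 2 * S) :=
    (hS2.add (hS1.mul_left _)).add (hS.mul_left _)
  have hterm : ∀ n, f (n + 2) + p * x * f (n + 1) + q * x ^ 2 * f n = 0 := fun n => by
    simp only [f]
    linear_combination x ^ (n + 2) * hrec n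
  simp only [hterm, Finset.sum_range_succ, Finset.sum_range_zero] at hzero
  have := hasSum_zero.unique hzero
  simp only [f, pow_zero, pow_one, mul_one] at this
  linear_combination -this

theorem sin_nat_add_three_mul_add_sin (n : ℕ) (φ : ℝ) :
    sin ((n + 2 + 1) * φ) + sin ((n + 1) * φ) = 2 * cos φ * sin ((n + 1 + 1) * φ) := by
  rw [show (n + 2 + 1) * φ = (n + 1 + 1) * φ + φ by ring,
    show (n + 1) * φ = (n + 1 + 1) * φ - φ by ring, sin_add, sin_sub]
  ring

theorem one_add_two_mul_cos_add_sq_pos {φ : ℝ} (h : sin φ ≠ 0) (x : ℝ) :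
    0 < 1 + 2 * x * cos φ + x ^ 2 := by
  have : 0 < sin φ ^ 2 := by positivity
  nlinarith [sin_sq_add_cos_sq φ, sq_nonneg (x + cos φ)]

theorem geometric_expansion (φ : ℝ) (h : Real.sin φ ≠ 0) (x : ℝ) (hx : |x| < 1) :
    Summable (fun n : ℕ => (-1) ^ n * (Real.sin ((n + 1) * φ) / Real.sin φ) * x ^ n) ∧
    1 / (1 + 2 * x * Real.cos φ + x ^ 2) =
      ∑' n : ℕ, (-1) ^ n * (Real.sin ((n + 1) * φ) / Real.sin φ) * x ^ n := by
  set a : ℕ → ℝ := fun n => (-1) ^ n * (sin ((n + 1) * φ) / sin φ)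
  have hbound : ∀ n, |a n| ≤ n + 1 := fun n => by
    simpa [a, abs_div, div_le_iff₀ (abs_pos.mpr h)] using abs_sin_nat_mul_le (n + 1) φ
  have hrec : ∀ n, a (n + 2) + 2 * cos φ * a (n + 1) + 1 * a n = 0 := fun n => by
    simp only [a, pow_succ]
    push_cast
    linear_combination (-1) ^ n / sin φ * sin_nat_add_three_mul_add_sin n φ
  have hs := summable_mul_pow_of_abs_le_succ hbound hx
  refine ⟨hs, ?_⟩
  have hseries := mul_tsum_eq_of_linear_recurrence hrec hs
  have ha0 : a 0 = 1 := by simp [a, h]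
  have ha1 : a 1 + 2 * cos φ * a 0 = 0 := by
    simp only [a, pow_one, pow_zero, Nat.cast_one, Nat.cast_zero, zero_add, one_add_one_eq_two,
      one_mul, sin_two_mul]
    field_simp
    ring
  rw [ha1, ha0, zero_mul, add_zero] at hseries
  rw [eq_comm, eq_div_iff (one_add_two_mul_cos_add_sq_pos h x).ne']
  linear_combination hseries
end

section
/- For every natural number n ≥ 0, the improper integral ∫₀¹ x^n · ln(ln(1/x)) dx converges and equals −(γ + ln(n+1)) / (n+1), where γ is the Euler–Mascheroni constant. -/
/-!
Substituting `x = exp (-t)` turns the integral into `∫₀^∞ log t · e^{-(n+1)t} dt`, and the scaling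
`u = (n+1) t` reduces that to `∫₀^∞ log u · e^{-u} du = Γ'(1) = -γ` and `∫₀^∞ e^{-u} du = 1`.
-/

open Real MeasureTheory Set

section ExpNegSubstitution

variable {E : Type*} [NormedAddCommGroup E] [NormedSpace ℝ E]

theorem image_exp_neg_Ioi_zero : (fun t : ℝ => exp (-t)) '' Ioi 0 = Ioo 0 1 := by
  rw [← exp_zero, ← image_exp_Iio, show (fun t : ℝ => exp (-t)) = exp ∘ Neg.neg from rfl,
    image_comp]
  simp

theorem hasDerivWithinAt_exp_neg (s : Set ℝ) (t : ℝ) :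
    HasDerivWithinAt (fun t => exp (-t)) (-exp (-t)) s t := by
  simpa using ((hasDerivAt_neg t).exp).hasDerivWithinAt

theorem injOn_exp_neg (s : Set ℝ) : InjOn (fun t : ℝ => exp (-t)) s :=
  fun _ _ _ _ h => neg_injective (exp_injective h)

theorem integrableOn_Ioo_zero_one_iff_comp_exp_neg (g : ℝ → E) :
    IntegrableOn g (Ioo 0 1) ↔ IntegrableOn (fun t => exp (-t) • g (exp (-t))) (Ioi 0) := by
  simpa [← image_exp_neg_Ioi_zero, abs_of_pos (exp_pos _)] using
    integrableOn_image_iff_integrableOn_abs_deriv_smul measurableSet_Ioi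
      (fun t _ => hasDerivWithinAt_exp_neg _ t) (injOn_exp_neg _) g

theorem integral_Ioo_zero_one_eq_integral_comp_exp_neg (g : ℝ → E) :
    ∫ x in Ioo 0 1, g x = ∫ t in Ioi 0, exp (-t) • g (exp (-t)) := by
  simpa [← image_exp_neg_Ioi_zero, abs_of_pos (exp_pos _)] using
    integral_image_eq_integral_abs_deriv_smul measurableSet_Ioi
      (fun t _ => hasDerivWithinAt_exp_neg _ t) (injOn_exp_neg _) g

end ExpNegSubstitution

theorem integral_log_mul_exp_neg :
    ∫ t in Ioi (0 : ℝ), log t * exp (-t) = -eulerMascheroniConstant := by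
  have hGamma : Complex.Gamma =ᶠ[nhds 1] Complex.GammaIntegral := by
    filter_upwards [(isOpen_lt continuous_const Complex.continuous_re).mem_nhds
      (by simp : (0 : ℝ) < (1 : ℂ).re)] with s hs using Complex.Gamma_eq_integral hs
  have hderiv := ((Complex.hasDerivAt_GammaIntegral (s := 1) (by simp)).congr_of_eventuallyEq
    hGamma).unique Complex.hasDerivAt_Gamma_one
  simp only [sub_self, Complex.cpow_zero, one_mul] at hderiv
  rw [← Complex.ofReal_inj, ← integral_complex_ofReal]
  exact_mod_cast hderiv

theorem integrableOn_log_mul_exp_neg :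
    IntegrableOn (fun t : ℝ => log t * exp (-t)) (Ioi 0) :=
  -- a non-integrable function has Bochner integral `0`, and this one integrates to `-γ ≠ 0`
  Integrable.of_integral_ne_zero <| by
    rw [integral_log_mul_exp_neg, neg_ne_zero]
    exact (one_half_pos.trans one_half_lt_eulerMascheroniConstant).ne'

section Scaling

variable {c : ℝ} (hc : 0 < c)
include hc

theorem log_mul_exp_neg_mul_eq {t : ℝ} (ht : 0 < t) :
    log t * exp (-(c * t)) = (log (c * t) - log c) * exp (-(c * t)) := by
  rw [log_mul hc.ne' ht.ne', add_sub_cancel_left]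

theorem integrableOn_log_mul_exp_neg_mul :
    IntegrableOn (fun t : ℝ => log t * exp (-(c * t))) (Ioi 0) := by
  have h := (integrableOn_Ioi_comp_mul_left_iff (fun u => (log u - log c) * exp (-u)) 0 hc).mpr
  rw [mul_zero] at h
  refine (integrableOn_congr_fun (fun t ht => log_mul_exp_neg_mul_eq hc ht)
    measurableSet_Ioi).mpr (h ?_)
  simp only [sub_mul]
  exact integrableOn_log_mul_exp_neg.sub ((integrableOn_exp_neg_Ioi 0).const_mul (log c))

theorem integral_log_mul_exp_neg_mul :
    ∫ t in Ioi (0 : ℝ), log t * exp (-(c * t)) = -(eulerMascheroniConstant + log c) / c := by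
  rw [setIntegral_congr_fun measurableSet_Ioi (fun t ht => log_mul_exp_neg_mul_eq hc ht),
    integral_comp_mul_left_Ioi (fun u => (log u - log c) * exp (-u)) 0 hc, mul_zero]
  simp only [sub_mul]
  rw [integral_sub integrableOn_log_mul_exp_neg ((integrableOn_exp_neg_Ioi 0).const_mul _),
    integral_log_mul_exp_neg, integral_const_mul, integral_exp_neg_Ioi_zero, smul_eq_mul]
  field_simp
  ring

end Scaling

theorem exp_neg_smul_pow_mul_log_log (n : ℕ) (t : ℝ) :
    exp (-t) • (exp (-t) ^ n * log (log (1 / exp (-t)))) = log t * exp (-((n + 1) * t)) := by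
  rw [one_div, ← exp_neg, neg_neg, log_exp, smul_eq_mul, ← exp_nat_mul, ← mul_assoc,
    ← exp_add, mul_comm]
  congr 2
  ring

theorem integral_pow_log_log (n : ℕ) :
    IntervalIntegrable (fun x : ℝ => x ^ n * Real.log (Real.log (1 / x))) volume 0 1 ∧
    ∫ x in (0:ℝ)..1, x ^ n * Real.log (Real.log (1 / x)) =
      -(Real.eulerMascheroniConstant + Real.log (n + 1)) / (n + 1) := by
  have hc : (0 : ℝ) < n + 1 := by positivity
  have hsubst := funext (exp_neg_smul_pow_mul_log_log n)
  have hint : IntegrableOn (fun x : ℝ => x ^ n * log (log (1 / x))) (Ioo 0 1) := by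
    rw [integrableOn_Ioo_zero_one_iff_comp_exp_neg, hsubst]
    exact integrableOn_log_mul_exp_neg_mul hc
  refine ⟨(intervalIntegrable_iff_integrableOn_Ioo_of_le zero_le_one).mpr hint, ?_⟩
  rw [intervalIntegral.integral_of_le zero_le_one, integral_Ioc_eq_integral_Ioo,
    integral_Ioo_zero_one_eq_integral_comp_exp_neg, hsubst, integral_log_mul_exp_neg_mul hc]
end

section
/- For every real s > 0, the improper integral ∫₀^∞ e^{−s·u} · ln u du converges and equals −(γ + ln s) / s, where γ is the Euler–Mascheroni constant. -/
/-!
Differentiating the Gamma integral under the integral sign gives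
`∫₀^∞ e^{-t} log t dt = Γ'(1) = -γ`. The substitution `t = s u` and `log u = log t - log s`
reduce the general case to this one and to `∫₀^∞ e^{-t} dt = 1`.
-/

open Real MeasureTheory Set Filter Asymptotics Topology

theorem integrableOn_exp_neg_mul_log_Ioi :
    IntegrableOn (fun t : ℝ => exp (-t) * log t) (Ioi 0) := by
  have hc : LocallyIntegrableOn (fun t : ℝ => log t * exp (-t)) (Ioi 0) :=
    ((continuousOn_log.mono fun _ ht => ne_of_gt ht).mul
      (continuous_exp.comp continuous_neg).continuousOn).locallyIntegrableOn measurableSet_Ioi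
  have h_top : (fun t : ℝ => log t * exp (-t)) =O[atTop] (· ^ (-2 : ℝ)) :=
    isBigO_rpow_top_log_smul (by norm_num : (2 : ℝ) < 3) <| by
      simpa only [neg_one_mul] using (isLittleO_exp_neg_mul_rpow_atTop one_pos _).isBigO
  have h_bot : (fun t : ℝ => log t * exp (-t)) =O[𝓝[>] 0] (· ^ (-(1 / 2) : ℝ)) := by
    refine isBigO_rpow_zero_log_smul (by norm_num : (0 : ℝ) < 1 / 2) ?_
    simp_rw [neg_zero, rpow_zero]
    exact ((continuous_exp.comp continuous_neg).tendsto 0).mono_left nhdsWithin_le_nhds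
      |>.isBigO_one ℝ
  refine (mellin_convergent_of_isBigO_scalar hc h_top (by norm_num : (1 : ℝ) < 2) h_bot
    (by norm_num : (1 / 2 : ℝ) < 1)).congr_fun (fun t _ => ?_) measurableSet_Ioi
  simp [mul_comm]

theorem integral_exp_neg_mul_log_Ioi :
    ∫ t in Ioi 0, exp (-t) * log t = -eulerMascheroniConstant := by
  have h_eq : Complex.GammaIntegral =ᶠ[𝓝 1] Complex.Gamma := by
    filter_upwards [Complex.continuous_re.isOpen_preimage _ isOpen_Ioi |>.mem_nhds
      (by simp : (1 : ℂ) ∈ Complex.re ⁻¹' Ioi 0)] with z hz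
    exact (Complex.Gamma_eq_integral hz).symm
  have h := (Complex.hasDerivAt_GammaIntegral (s := 1) (by simp)).unique
    (Complex.hasDerivAt_Gamma_one.congr_of_eventuallyEq h_eq)
  simp_rw [sub_self, Complex.cpow_zero, one_mul, ← Complex.ofReal_mul] at h
  rw [integral_complex_ofReal, ← Complex.ofReal_neg] at h
  simpa only [mul_comm (exp _)] using Complex.ofReal_injective h

section Scaling

variable {f : ℝ → ℝ} {c : ℝ}

theorem eqOn_comp_mul_left_mul_log (hc : 0 < c) :
    EqOn (fun u => f (c * u) * log u) (fun u => f (c * u) * log (c * u) - log c * f (c * u))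
      (Ioi 0) := fun u hu => by
  simp only [log_mul hc.ne' (ne_of_gt hu)]
  ring

theorem integrableOn_comp_mul_left_mul_log_Ioi (hc : 0 < c) (hf : IntegrableOn f (Ioi 0))
    (hf_log : IntegrableOn (fun t => f t * log t) (Ioi 0)) :
    IntegrableOn (fun u => f (c * u) * log u) (Ioi 0) := by
  have h_comp {g : ℝ → ℝ} (hg : IntegrableOn g (Ioi 0)) :
      IntegrableOn (fun u => g (c * u)) (Ioi 0) :=
    (integrableOn_Ioi_comp_mul_left_iff g 0 hc).mpr (by rwa [mul_zero])
  exact ((h_comp hf_log).sub ((h_comp hf).const_mul (log c))).congr_fun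
    (eqOn_comp_mul_left_mul_log hc).symm measurableSet_Ioi

theorem integral_comp_mul_left_mul_log_Ioi (hc : 0 < c) (hf : IntegrableOn f (Ioi 0))
    (hf_log : IntegrableOn (fun t => f t * log t) (Ioi 0)) :
    ∫ u in Ioi 0, f (c * u) * log u =
      ((∫ t in Ioi 0, f t * log t) - log c * ∫ t in Ioi 0, f t) / c := by
  have h_sub := integral_comp_mul_left_Ioi (fun t => f t * log t - log c * f t) 0 hc
  rw [mul_zero] at h_sub
  rw [setIntegral_congr_fun measurableSet_Ioi (eqOn_comp_mul_left_mul_log hc), h_sub,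
    integral_sub hf_log (hf.const_mul _), integral_const_mul, smul_eq_mul, inv_mul_eq_div]

end Scaling

theorem integral_exp_mul_log (s : ℝ) (hs : 0 < s) :
    IntegrableOn (fun u : ℝ => Real.exp (-s * u) * Real.log u) (Set.Ioi 0) volume ∧
    ∫ u in Set.Ioi (0:ℝ), Real.exp (-s * u) * Real.log u =
      -(Real.eulerMascheroniConstant + Real.log s) / s := by
  have h_exp : IntegrableOn (fun t : ℝ => exp (-t)) (Ioi 0) := integrableOn_exp_neg_Ioi 0
  simp_rw [neg_mul]
  refine ⟨integrableOn_comp_mul_left_mul_log_Ioi (f := fun t => exp (-t)) hs h_exp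
    integrableOn_exp_neg_mul_log_Ioi, ?_⟩
  rw [integral_comp_mul_left_mul_log_Ioi (f := fun t => exp (-t)) hs h_exp
    integrableOn_exp_neg_mul_log_Ioi, integral_exp_neg_mul_log_Ioi, integral_exp_neg_Ioi_zero]
  ring
end
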